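/- Let V be a real normed vector space and let M, A : V → V → ℝ be continuous symmetric bilinear forms with M(v,v) ≥ 0 and A(v,v) ≥ 0 for all v ∈ V. Let T > 0, let u : [0,T] → V be twice continuously differentiable, and suppose there are maps F(t) : V → ℝ and a continuous nonnegative function g : [0,T] → ℝ such that M(u''(t), v) + A(u(t), v) = F(t)(v) for all v ∈ V and all t ∈ [0,T], and such that |F(t)(u'(t))| ≤ g(t) · √(M(u'(t), u'(t))) for all t ∈ [0,T]. Then for every t ∈ [0,T], √(M(u'(t), u'(t)) + A(u(t), u(t))) ≤ √(M(u'(0), u'(0)) + A(u(0), u(0))) + ∫₀ᵗ g(τ) dτ. (This is the abstract core of the paper's stability theorem (Theorem 1) for the semi-discrete virtual element approximation of linear elastodynamics: M plays the role of the discrete mass form m_h, A the discrete stiffness form a_h, F(t) the discrete right-hand side F_h, and g(t) the L²-norm of the load f(t).) -/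

import Mathlib

/-!
The energy `E = M(u',u') + A(u,u)` has derivative `2 F(u')`, by the symmetry of `M` and `A` and
the equation tested with `v = u'`; the bound on `F` then gives `E' ≤ 2 g √M ≤ 2 g √E`. Thus
`√(E + δ²) - ∫ g` has nonpositive derivative and is antitone for every `δ > 0` (the shift keeps
the square root differentiable where `E` vanishes), and letting `δ → 0` gives the estimate.
-/

open MeasureTheory Set

theorem sqrt_le_sqrt_add_integral_of_pos {P P' g : ℝ → ℝ} {a b : ℝ} (hab : a ≤ b)
    (hPpos : ∀ s ∈ Icc a b, 0 < P s) (hPc : ContinuousOn P (Icc a b))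
    (hP : ∀ s ∈ Ioo a b, HasDerivAt P (P' s) s) (hg : ContinuousOn g (Icc a b))
    (hbound : ∀ s ∈ Ioo a b, P' s ≤ 2 * g s * √(P s)) :
    √(P b) ≤ √(P a) + ∫ τ in a..b, g τ := by
  have hgint : ∀ s ∈ Icc a b, IntervalIntegrable g volume a s := fun s hs =>
    (hg.mono (Icc_subset_Icc_right hs.2)).intervalIntegrable_of_Icc hs.1
  have hcont : ContinuousOn (fun s => √(P s) - ∫ τ in a..s, g τ) (Icc a b) := by
    refine hPc.sqrt.sub ?_
    have hprim := intervalIntegral.continuousOn_primitive_interval (μ := volume) (a := a)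
      (b := b) (f := g) (by rw [uIcc_of_le hab]; exact hg.integrableOn_Icc)
    rwa [uIcc_of_le hab] at hprim
  have hderiv : ∀ s ∈ interior (Icc a b), HasDerivWithinAt (fun s => √(P s) - ∫ τ in a..s, g τ)
      (P' s / (2 * √(P s)) - g s) (interior (Icc a b)) s := by
    rw [interior_Icc]
    intro s hs
    have hsI : s ∈ Icc a b := Ioo_subset_Icc_self hs
    have hgs : ContinuousAt g s := hg.continuousAt (Icc_mem_nhds hs.1 hs.2)
    have hprim := intervalIntegral.integral_hasDerivAt_right (hgint s hsI)
      ((hg.mono Ioo_subset_Icc_self).stronglyMeasurableAtFilter isOpen_Ioo s hs) hgs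
    exact (((hP s hs).sqrt (hPpos s hsI).ne').sub hprim).hasDerivWithinAt
  have hnonpos : ∀ s ∈ interior (Icc a b), P' s / (2 * √(P s)) - g s ≤ 0 := by
    rw [interior_Icc]
    intro s hs
    have hsqrt : 0 < √(P s) := Real.sqrt_pos.2 (hPpos s (Ioo_subset_Icc_self hs))
    rw [sub_nonpos, div_le_iff₀ (by positivity)]
    linarith [hbound s hs]
  have hanti := antitoneOn_of_hasDerivWithinAt_nonpos (convex_Icc a b) hcont hderiv hnonpos
    (left_mem_Icc.2 hab) (right_mem_Icc.2 hab) hab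
  simp only [intervalIntegral.integral_same, sub_zero] at hanti
  linarith

theorem sqrt_le_sqrt_add_integral {E E' g : ℝ → ℝ} {a b : ℝ} (hab : a ≤ b)
    (hE0 : ∀ s ∈ Icc a b, 0 ≤ E s) (hEc : ContinuousOn E (Icc a b))
    (hE : ∀ s ∈ Ioo a b, HasDerivAt E (E' s) s) (hg : ContinuousOn g (Icc a b))
    (hg0 : ∀ s ∈ Ioo a b, 0 ≤ g s) (hbound : ∀ s ∈ Ioo a b, E' s ≤ 2 * g s * √(E s)) :
    √(E b) ≤ √(E a) + ∫ τ in a..b, g τ := by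
  refine le_of_forall_pos_le_add fun δ hδ => ?_
  have hshift := sqrt_le_sqrt_add_integral_of_pos (P := fun s => E s + δ ^ 2) hab
    (fun s hs => by have := hE0 s hs; positivity) (hEc.add continuousOn_const)
    (fun s hs => (hE s hs).add_const _) hg fun s hs =>
      (hbound s hs).trans (by
        have := hg0 s hs
        gcongr
        exact le_add_of_nonneg_right (sq_nonneg δ))
  have hleft : √(E b) ≤ √(E b + δ ^ 2) := Real.sqrt_le_sqrt (le_add_of_nonneg_right (sq_nonneg δ))
  have hright : √(E a + δ ^ 2) ≤ √(E a) + δ := by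
    rw [Real.sqrt_le_left (by positivity)]
    nlinarith [Real.sq_sqrt (hE0 a (left_mem_Icc.2 hab)), Real.sqrt_nonneg (E a)]
  linarith

theorem HasDerivAt.bilin_apply_self {V : Type*} [NormedAddCommGroup V] [NormedSpace ℝ V]
    {B : V →L[ℝ] V →L[ℝ] ℝ} (hB : ∀ v w, B v w = B w v) {x : ℝ → V} {x' : V} {t : ℝ}
    (hx : HasDerivAt x x' t) : HasDerivAt (fun s => B (x s) (x s)) (2 * B (x t) x') t := by
  refine ((B.hasFDerivAt.comp_hasDerivAt t hx).clm_apply hx).congr_deriv ?_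
  rw [hB x' (x t), Function.comp_apply]
  ring

theorem semidiscrete_stability_general
    {V : Type*} [NormedAddCommGroup V] [NormedSpace ℝ V]
    (M A : V →L[ℝ] V →L[ℝ] ℝ)
    (hMsymm : ∀ v w : V, M v w = M w v)
    (hAsymm : ∀ v w : V, A v w = A w v)
    (hMpos : ∀ v : V, 0 ≤ M v v)
    (hApos : ∀ v : V, 0 ≤ A v v)
    (T : ℝ)
    (u u' u'' : ℝ → V)
    (hu : ∀ t ∈ Icc (0:ℝ) T, HasDerivAt u (u' t) t)
    (hu' : ∀ t ∈ Icc (0:ℝ) T, HasDerivAt u' (u'' t) t)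
    (F : ℝ → V → ℝ) (g : ℝ → ℝ)
    (hg : ContinuousOn g (Icc (0:ℝ) T))
    (hgpos : ∀ t ∈ Icc (0:ℝ) T, 0 ≤ g t)
    (heq : ∀ t ∈ Icc (0:ℝ) T, ∀ v : V, M (u'' t) v + A (u t) v = F t v)
    (hb : ∀ t ∈ Icc (0:ℝ) T, |F t (u' t)| ≤ g t * Real.sqrt (M (u' t) (u' t))) :
    ∀ t ∈ Icc (0:ℝ) T,
      Real.sqrt (M (u' t) (u' t) + A (u t) (u t)) ≤
        Real.sqrt (M (u' 0) (u' 0) + A (u 0) (u 0)) + ∫ τ in (0:ℝ)..t, g τ := by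
  intro t ht
  have hsub : Icc 0 t ⊆ Icc 0 T := Icc_subset_Icc_right ht.2
  have hIoo : Ioo 0 t ⊆ Icc 0 T := Ioo_subset_Icc_self.trans hsub
  have henergy : ∀ s ∈ Icc 0 T, HasDerivAt (fun s => M (u' s) (u' s) + A (u s) (u s))
      (2 * F s (u' s)) s := fun s hs =>
    (((hu' s hs).bilin_apply_self hMsymm).add ((hu s hs).bilin_apply_self hAsymm)).congr_deriv
      (by rw [← heq s hs, hMsymm (u' s)]; ring)
  refine sqrt_le_sqrt_add_integral ht.1 (fun s _ => add_nonneg (hMpos _) (hApos _))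
    (fun s hs => (henergy s (hsub hs)).continuousAt.continuousWithinAt)
    (fun s hs => henergy s (hIoo hs)) (hg.mono hsub) (fun s hs => hgpos s (hIoo hs))
    fun s hs => ?_
  have hg0 := hgpos s (hIoo hs)
  calc 2 * F s (u' s) ≤ 2 * (g s * √(M (u' s) (u' s))) := by
        linarith [le_abs_self (F s (u' s)), hb s (hIoo hs)]
    _ ≤ 2 * g s * √(M (u' s) (u' s) + A (u s) (u s)) := by
        rw [← mul_assoc]
        gcongr
        exact le_add_of_nonneg_right (hApos _)

/-- Abstract stability theorem for the semi-discrete virtual element approximation of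
linear elastodynamics: `M` plays the role of the discrete mass form `m_h`, `A` the discrete
stiffness form `a_h`, `F t` the discrete right-hand side `F_h`, and `g t` the `L²`-norm of the
load `f(t)`. -/
theorem semidiscrete_stability
    {V : Type*} [NormedAddCommGroup V] [NormedSpace ℝ V]
    (M A : V →L[ℝ] V →L[ℝ] ℝ)
    (hMsymm : ∀ v w : V, M v w = M w v)
    (hAsymm : ∀ v w : V, A v w = A w v)
    (hMpos : ∀ v : V, 0 ≤ M v v)
    (hApos : ∀ v : V, 0 ≤ A v v)
    (T : ℝ) (hT : 0 < T)
    (u u' u'' : ℝ → V)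
    (hu : ∀ t ∈ Icc (0:ℝ) T, HasDerivAt u (u' t) t)
    (hu' : ∀ t ∈ Icc (0:ℝ) T, HasDerivAt u' (u'' t) t)
    (hu'' : ContinuousOn u'' (Icc (0:ℝ) T))
    (F : ℝ → V → ℝ) (g : ℝ → ℝ)
    (hg : ContinuousOn g (Icc (0:ℝ) T))
    (hgpos : ∀ t ∈ Icc (0:ℝ) T, 0 ≤ g t)
    (heq : ∀ t ∈ Icc (0:ℝ) T, ∀ v : V, M (u'' t) v + A (u t) v = F t v)
    (hb : ∀ t ∈ Icc (0:ℝ) T, |F t (u' t)| ≤ g t * Real.sqrt (M (u' t) (u' t))) :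
    ∀ t ∈ Icc (0:ℝ) T,
      Real.sqrt (M (u' t) (u' t) + A (u t) (u t)) ≤
        Real.sqrt (M (u' 0) (u' 0) + A (u 0) (u 0)) + ∫ τ in (0:ℝ)..t, g τ :=
  semidiscrete_stability_general M A hMsymm hAsymm hMpos hApos T u u' u'' hu hu' F g hg hgpos heq hb
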